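/- arXiv:1307.5962 — 3 statements merged into one kernel-verified Lean document; each statement's English description precedes it below -/
import Mathlib

section
/- Let n, d ≥ 1 and let ρ be a probability measure on the set S = {c : Fin n → ℕ : ∑ c_i = d}. Let A = {j : ∃ c ∈ S, ρ(c) > 0 and c_j > 0}. Assume: (i) ρ(c) > 0 for every c ∈ S supported on A (i.e., c_j = 0 for all j ∉ A); and (ii) for all c ∈ S with ρ(c) > 0 and all j, k with c_j > 0 and c_k > 0, one has ((c_j + δ_{jk})/(c_j + 1)) · (ρ(c)/ρ(c - e_j + e_k)) = ((c_k + 1)/(c_k + δ_{jk})) · (ρ(c - e_k + e_j)/ρ(c)). Then ρ is multinomial: there exist nonnegative reals p_j (j ∈ A) with ∑_{j∈A} p_j = 1 such that ρ(c) = (d! / ∏_j c_j!) · ∏_j p_j^{c_j} for all c ∈ S supported on A. -/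
/-!
Put `f c = ρ c * ∏ i, (c i)!`. Detailed balance says exactly that
`f c ^ 2 = f (c - e_j + e_k) * f (c + e_j - e_k)` whenever `c_j, c_k > 0`, i.e. `log f` is affine
along every lattice line of the simplex in a direction `e_k - e_j`. Such an `f` is determined by its
values at a vertex `d e_{j₀}` and at the neighbours of that vertex, by induction on `d - c_{j₀}`:
a point with `c_j ≥ 2` for some `j ≠ j₀` is the end of a line whose two other points lie closer to
the vertex, and a point with two positive coordinates `j, l ≠ j₀` is the midpoint of the line in
direction `e_l - e_j`, whose two ends are of the first kind. Comparing with `f (d e_{j₀}) * ∏ b_j ^ c_j`, which is log-affine and fits at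
the vertex and its neighbours, gives this form for `f`; normalizing `b` and the multinomial theorem
then pin the constant.
-/

open Finset
open scoped Nat

variable {ι : Type*}

section unitMove

variable [DecidableEq ι]

/-- `c - e_j + e_k`; the subtraction truncates, so lemmas assume `0 < c j`. -/
def unitMove (c : ι → ℕ) (j k : ι) : ι → ℕ :=
  fun i => c i - (if i = j then 1 else 0) + (if i = k then 1 else 0)

variable {c : ι → ℕ} {i j k : ι}

theorem unitMove_apply_left (hjk : j ≠ k) : unitMove c j k j = c j - 1 := by
  simp [unitMove, hjk]

theorem unitMove_apply_right (hjk : j ≠ k) : unitMove c j k k = c k + 1 := by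
  simp [unitMove, hjk.symm]

theorem unitMove_apply_of_ne (hij : i ≠ j) (hik : i ≠ k) : unitMove c j k i = c i := by
  simp [unitMove, hij, hik]

theorem unitMove_self (hj : 0 < c j) : unitMove c j j = c := by
  funext i
  by_cases hij : i = j <;> simp [unitMove, hij]
  omega

theorem unitMove_unitMove (hj : 0 < c j) : unitMove (unitMove c j k) k j = c := by
  funext i
  simp only [unitMove]
  split_ifs <;> subst_vars <;> omega

theorem unitMove_add_ite (hj : 0 < c j) (i : ι) :
    unitMove c j k i + (if i = j then 1 else 0) = c i + (if i = k then 1 else 0) := by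
  simp only [unitMove]
  split_ifs <;> subst_vars <;> omega

theorem unitMove_add_unitMove (hj : 0 < c j) (hk : 0 < c k) (i : ι) :
    unitMove c j k i + unitMove c k j i = 2 * c i := by
  simp only [unitMove]
  split_ifs <;> subst_vars <;> omega

variable [Fintype ι]

theorem sum_unitMove (hj : 0 < c j) : ∑ i, unitMove c j k i = ∑ i, c i := by
  have h := Finset.sum_congr rfl fun i (_ : i ∈ univ) => unitMove_add_ite (k := k) hj i
  simpa [Finset.sum_add_distrib] using h

theorem prod_pow_unitMove_mul {M : Type*} [CommMonoid M] (b : ι → M) (hj : 0 < c j) :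
    (∏ i, b i ^ unitMove c j k i) * b j = (∏ i, b i ^ c i) * b k := by
  have h := Finset.prod_congr rfl fun i (_ : i ∈ univ) =>
    congrArg (b i ^ ·) (unitMove_add_ite (k := k) hj i)
  simpa only [pow_add, Finset.prod_mul_distrib, pow_ite, pow_one, pow_zero,
    Finset.prod_ite_eq', Finset.mem_univ, if_true] using h

theorem prod_pow_unitMove_mul_prod_pow_unitMove {M : Type*} [CommMonoid M] (b : ι → M)
    (hj : 0 < c j) (hk : 0 < c k) :
    (∏ i, b i ^ unitMove c j k i) * ∏ i, b i ^ unitMove c k j i = (∏ i, b i ^ c i) ^ 2 := by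
  simp only [← Finset.prod_mul_distrib, ← pow_add, unitMove_add_unitMove hj hk, ← Finset.prod_pow,
    pow_mul']

theorem prod_factorial_unitMove_mul (hjk : j ≠ k) (hj : 0 < c j) :
    (∏ i, (unitMove c j k i)!) * c j = (∏ i, (c i)!) * (c k + 1) := by
  have h : ∀ i, (unitMove c j k i)! * (if i = j then c j else 1)
      = (c i)! * (if i = k then c k + 1 else 1) := by
    intro i
    by_cases hij : i = j
    · subst hij
      rw [unitMove_apply_left hjk, if_pos rfl, if_neg hjk, mul_one, mul_comm,
        Nat.mul_factorial_pred hj.ne']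
    by_cases hik : i = k
    · subst hik
      rw [unitMove_apply_right hjk, if_neg hij, if_pos rfl, mul_one, Nat.factorial_succ, mul_comm]
    · rw [unitMove_apply_of_ne hij hik, if_neg hij, if_neg hik]
  have := Finset.prod_congr rfl fun i (_ : i ∈ univ) => h i
  simpa only [Finset.prod_mul_distrib, Finset.prod_ite_eq', Finset.mem_univ, if_true] using this

end unitMove

theorem exists_pos_apply_notMem_of_sum_lt [Fintype ι] [DecidableEq ι] {c : ι → ℕ} {s : Finset ι}
    (h : ∑ i ∈ s, c i < ∑ i, c i) : ∃ l ∉ s, 0 < c l := by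
  rw [← Finset.sum_compl_add_sum s] at h
  obtain ⟨l, hl, hcl⟩ := Finset.exists_ne_zero_of_sum_ne_zero (s := sᶜ) (f := c) (by omega)
  exact ⟨l, Finset.mem_compl.mp hl, Nat.pos_of_ne_zero hcl⟩

def latticeSimplex [Fintype ι] (A : Set ι) (d : ℕ) : Set (ι → ℕ) :=
  {c | ∑ i, c i = d ∧ ∀ i ∉ A, c i = 0}

namespace latticeSimplex

variable [Fintype ι] {A : Set ι} {d : ℕ} {c : ι → ℕ} {i j k : ι}

theorem apply_le (hc : c ∈ latticeSimplex A d) (i : ι) : c i ≤ d :=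
  hc.1 ▸ Finset.single_le_sum (fun _ _ => Nat.zero_le _) (Finset.mem_univ i)

theorem mem_of_pos (hc : c ∈ latticeSimplex A d) (hi : 0 < c i) : i ∈ A := by
  by_contra h
  exact hi.ne' (hc.2 i h)

variable [DecidableEq ι]

theorem single_mem (hj : j ∈ A) : Pi.single j d ∈ latticeSimplex A d := by
  refine ⟨by simp, fun i hi => ?_⟩
  rw [Pi.single_apply, if_neg (ne_of_mem_of_not_mem hj hi).symm]

theorem eq_single_of_apply_eq (hc : c ∈ latticeSimplex A d) (hj : c j = d) :
    c = Pi.single j d := by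
  funext i
  by_cases hij : i = j
  · subst hij
    simp [hj]
  · rw [Pi.single_apply, if_neg hij]
    have := Finset.add_le_sum (f := c) (fun _ _ => Nat.zero_le _) (Finset.mem_univ j)
      (Finset.mem_univ i) (Ne.symm hij)
    have := hc.1
    omega

theorem unitMove_mem (hc : c ∈ latticeSimplex A d) (hj : 0 < c j) (hk : k ∈ A) :
    unitMove c j k ∈ latticeSimplex A d := by
  refine ⟨(sum_unitMove hj).trans hc.1, fun i hi => ?_⟩
  have hij : i ≠ j := fun h => hi (h ▸ mem_of_pos hc hj)
  rw [unitMove_apply_of_ne hij (ne_of_mem_of_not_mem hk hi).symm, hc.2 i hi]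

end latticeSimplex

section LogAffine

variable [Fintype ι] [DecidableEq ι]

def LogAffineAlongMoves {M : Type*} [Monoid M] (A : Set ι) (d : ℕ) (f : (ι → ℕ) → M) : Prop :=
  ∀ c ∈ latticeSimplex A d, ∀ j k, 0 < c j → 0 < c k →
    f c ^ 2 = f (unitMove c j k) * f (unitMove c k j)

variable {A : Set ι} {d : ℕ}

theorem logAffineAlongMoves_const_mul_prod_pow {M : Type*} [CommMonoid M] (K : M) (b : ι → M) :
    LogAffineAlongMoves A d fun c => K * ∏ i, b i ^ c i := by
  intro c _ j k hj hk
  rw [mul_mul_mul_comm, prod_pow_unitMove_mul_prod_pow_unitMove b hj hk, ← sq, mul_pow]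

namespace LogAffineAlongMoves

variable {f F : (ι → ℕ) → ℝ} {j₀ : ι} {c : ι → ℕ}

theorem eq_of_eq_above_of_two_le (hf : LogAffineAlongMoves A d f) (hF : LogAffineAlongMoves A d F)
    (hFpos : ∀ c ∈ latticeSimplex A d, 0 < F c) (hj₀ : j₀ ∈ A) (hc : c ∈ latticeSimplex A d)
    (hup : ∀ c' ∈ latticeSimplex A d, c j₀ < c' j₀ → f c' = F c')
    {j : ι} (hjj₀ : j ≠ j₀) (hj : 2 ≤ c j) : f c = F c := by
  set c₁ := unitMove c j j₀
  set c₂ := unitMove c₁ j j₀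
  have hc₁ : c₁ ∈ latticeSimplex A d := latticeSimplex.unitMove_mem hc (by omega) hj₀
  have hc₁j : c₁ j = c j - 1 := unitMove_apply_left hjj₀
  have hc₁j₀ : c₁ j₀ = c j₀ + 1 := unitMove_apply_right hjj₀
  have hc₂ : c₂ ∈ latticeSimplex A d := latticeSimplex.unitMove_mem hc₁ (by omega) hj₀
  have hc₂j₀ : c₂ j₀ = c₁ j₀ + 1 := unitMove_apply_right hjj₀
  have hline : ∀ g : (ι → ℕ) → ℝ, LogAffineAlongMoves A d g → g c₁ ^ 2 = g c * g c₂ := by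
    intro g hg
    rw [hg c₁ hc₁ j₀ j (by omega) (by omega), unitMove_unitMove (by omega)]
  have hf₁ := hup c₁ hc₁ (by omega)
  have hf₂ := hup c₂ hc₂ (by omega)
  refine mul_right_cancel₀ (hFpos c₂ hc₂).ne' ?_
  rw [← hf₂, ← hline f hf, hf₁, hline F hF, hf₂]

theorem eq_of_eq_above_of_pos_of_pos (hf : LogAffineAlongMoves A d f)
    (hF : LogAffineAlongMoves A d F) (hf₀ : ∀ c ∈ latticeSimplex A d, 0 ≤ f c)
    (hFpos : ∀ c ∈ latticeSimplex A d, 0 < F c) (hj₀ : j₀ ∈ A) (hc : c ∈ latticeSimplex A d)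
    (hup : ∀ c' ∈ latticeSimplex A d, c j₀ < c' j₀ → f c' = F c')
    {j l : ι} (hjj₀ : j ≠ j₀) (hlj₀ : l ≠ j₀) (hjl : j ≠ l) (hcj : 0 < c j) (hcl : 0 < c l) :
    f c = F c := by
  have h₁ : f (unitMove c j l) = F (unitMove c j l) :=
    eq_of_eq_above_of_two_le hf hF hFpos hj₀
      (latticeSimplex.unitMove_mem hc hcj (latticeSimplex.mem_of_pos hc hcl))
      (by rwa [unitMove_apply_of_ne hjj₀.symm hlj₀.symm]) hlj₀
      (by rw [unitMove_apply_right hjl]; omega)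
  have h₂ : f (unitMove c l j) = F (unitMove c l j) :=
    eq_of_eq_above_of_two_le hf hF hFpos hj₀
      (latticeSimplex.unitMove_mem hc hcl (latticeSimplex.mem_of_pos hc hcj))
      (by rwa [unitMove_apply_of_ne hlj₀.symm hjj₀.symm]) hjj₀
      (by rw [unitMove_apply_right hjl.symm]; omega)
  have hsq : f c ^ 2 = F c ^ 2 := by rw [hf c hc j l hcj hcl, hF c hc j l hcj hcl, h₁, h₂]
  exact (pow_left_inj₀ (hf₀ c hc) (hFpos c hc).le two_ne_zero).mp hsq

theorem eq_of_eq_above (hf : LogAffineAlongMoves A d f) (hF : LogAffineAlongMoves A d F)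
    (hf₀ : ∀ c ∈ latticeSimplex A d, 0 ≤ f c) (hFpos : ∀ c ∈ latticeSimplex A d, 0 < F c)
    (hj₀ : j₀ ∈ A) (hvertex : f (Pi.single j₀ d) = F (Pi.single j₀ d))
    (hnbr : ∀ j ∈ A, f (unitMove (Pi.single j₀ d) j₀ j) = F (unitMove (Pi.single j₀ d) j₀ j))
    (hc : c ∈ latticeSimplex A d)
    (hup : ∀ c' ∈ latticeSimplex A d, c j₀ < c' j₀ → f c' = F c') : f c = F c := by
  rcases (latticeSimplex.apply_le hc j₀).eq_or_lt with hcj₀ | hcj₀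
  · rwa [latticeSimplex.eq_single_of_apply_eq hc hcj₀]
  obtain ⟨j, hj, hcj⟩ := exists_pos_apply_notMem_of_sum_lt (c := c) (s := {j₀})
    (by rwa [sum_singleton, hc.1])
  have hjj₀ : j ≠ j₀ := by simpa using hj
  by_cases hc₀ : c j₀ + 1 = d
  · have hback : unitMove c j j₀ = Pi.single j₀ d :=
      latticeSimplex.eq_single_of_apply_eq (latticeSimplex.unitMove_mem hc hcj hj₀)
        (by rw [unitMove_apply_right hjj₀, hc₀])
    rw [← unitMove_unitMove (k := j₀) hcj, hback]
    exact hnbr j (latticeSimplex.mem_of_pos hc hcj)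
  by_cases hj2 : 2 ≤ c j
  · exact eq_of_eq_above_of_two_le hf hF hFpos hj₀ hc hup hjj₀ hj2
  obtain ⟨l, hl, hcl⟩ := exists_pos_apply_notMem_of_sum_lt (c := c) (s := {j₀, j})
    (by rw [sum_pair hjj₀.symm, hc.1]; omega)
  obtain ⟨hlj₀, hlj⟩ : l ≠ j₀ ∧ l ≠ j := by simpa using hl
  exact eq_of_eq_above_of_pos_of_pos hf hF hf₀ hFpos hj₀ hc hup hjj₀ hlj₀ hlj.symm hcj hcl

theorem eqOn_latticeSimplex (hf : LogAffineAlongMoves A d f) (hF : LogAffineAlongMoves A d F)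
    (hf₀ : ∀ c ∈ latticeSimplex A d, 0 ≤ f c) (hFpos : ∀ c ∈ latticeSimplex A d, 0 < F c)
    (hj₀ : j₀ ∈ A) (hvertex : f (Pi.single j₀ d) = F (Pi.single j₀ d))
    (hnbr : ∀ j ∈ A, f (unitMove (Pi.single j₀ d) j₀ j) = F (unitMove (Pi.single j₀ d) j₀ j)) :
    Set.EqOn f F (latticeSimplex A d) := by
  intro c hc
  induction hL : d - c j₀ using Nat.strong_induction_on generalizing c with
  | _ L ih =>
    refine eq_of_eq_above hf hF hf₀ hFpos hj₀ hvertex hnbr hc fun c' hc' hlt => ?_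
    have := latticeSimplex.apply_le hc' j₀
    exact ih (d - c' j₀) (by omega) hc' rfl

theorem exists_eqOn_const_mul_prod_pow (hf : LogAffineAlongMoves A d f)
    (hpos : ∀ c ∈ latticeSimplex A d, 0 < f c) (hd : 0 < d) (hj₀ : j₀ ∈ A) :
    ∃ b : ι → ℝ, (∀ j ∈ A, 0 < b j) ∧ (∀ j ∉ A, b j = 0) ∧
      Set.EqOn f (fun c => f (Pi.single j₀ d) * ∏ i, b i ^ c i) (latticeSimplex A d) := by
  classical
  set c₀ : ι → ℕ := Pi.single j₀ d
  have hc₀ : c₀ ∈ latticeSimplex A d := latticeSimplex.single_mem hj₀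
  have hc₀j₀ : 0 < c₀ j₀ := by simpa [c₀] using hd
  set b : ι → ℝ := fun j => if j ∈ A then f (unitMove c₀ j₀ j) / f c₀ else 0
  have hb : ∀ j ∈ A, f (unitMove c₀ j₀ j) = f c₀ * b j := fun j hj => by
    simp only [b, if_pos hj]
    field_simp [(hpos c₀ hc₀).ne']
  have hbpos : ∀ j ∈ A, 0 < b j := fun j hj => by
    simp only [b, if_pos hj]
    exact div_pos (hpos _ (latticeSimplex.unitMove_mem hc₀ hc₀j₀ hj)) (hpos c₀ hc₀)
  have hbj₀ : b j₀ = 1 := by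
    simp only [b, if_pos hj₀, unitMove_self hc₀j₀]
    exact div_self (hpos c₀ hc₀).ne'
  have hprod₀ : ∏ i, b i ^ c₀ i = 1 := by
    refine Finset.prod_eq_one fun i _ => ?_
    by_cases hi : i = j₀
    · rw [hi, hbj₀, one_pow]
    · simp [c₀, hi]
  refine ⟨b, hbpos, fun j hj => if_neg hj, ?_⟩
  refine eqOn_latticeSimplex hf (logAffineAlongMoves_const_mul_prod_pow _ _)
    (fun c hc => (hpos c hc).le) (fun c hc => mul_pos (hpos c₀ hc₀) ?_) hj₀
    (by rw [hprod₀, mul_one]) fun j hj => ?_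
  · refine Finset.prod_pos fun i _ => ?_
    rcases (c i).eq_zero_or_pos with hci | hci
    · rw [hci, pow_zero]; exact one_pos
    · exact pow_pos (hbpos i (latticeSimplex.mem_of_pos hc hci)) _
  · have := prod_pow_unitMove_mul b (k := j) hc₀j₀
    rw [hbj₀, mul_one, hprod₀, one_mul] at this
    rw [hb j hj, this]

end LogAffineAlongMoves

end LogAffine

section DetailedBalance

variable [Fintype ι] [DecidableEq ι] {ρ : (ι → ℕ) → ℝ}

theorem mul_prod_factorial_sq_eq {c : ι → ℕ} {j k : ι} (hjk : j ≠ k) (hj : 0 < c j)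
    (hk : 0 < c k)
    (h : (c j : ℝ) * c k * ρ c ^ 2
      = (c j + 1) * (c k + 1) * (ρ (unitMove c j k) * ρ (unitMove c k j))) :
    (ρ c * ∏ i, ((c i)! : ℝ)) ^ 2
      = (ρ (unitMove c j k) * ∏ i, ((unitMove c j k i)! : ℝ))
        * (ρ (unitMove c k j) * ∏ i, ((unitMove c k j i)! : ℝ)) := by
  have hjk' : ((∏ i, (unitMove c j k i)! : ℕ) : ℝ) * c j = (∏ i, ((c i)! : ℝ)) * (c k + 1) := by
    exact_mod_cast prod_factorial_unitMove_mul hjk hj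
  have hkj : ((∏ i, (unitMove c k j i)! : ℕ) : ℝ) * c k = (∏ i, ((c i)! : ℝ)) * (c j + 1) := by
    exact_mod_cast prod_factorial_unitMove_mul hjk.symm hk
  push_cast at hjk' hkj
  refine mul_left_cancel₀ (by positivity : (c j : ℝ) * c k ≠ 0) ?_
  linear_combination (∏ i, ((c i)! : ℝ)) ^ 2 * h
    - ρ (unitMove c j k) * ρ (unitMove c k j) * (∏ i, ((unitMove c k j i)! : ℝ)) * c k * hjk'
    - ρ (unitMove c j k) * ρ (unitMove c k j) * (∏ i, ((c i)! : ℝ)) * (c k + 1) * hkj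

def DetailedBalance (d : ℕ) (ρ : (ι → ℕ) → ℝ) : Prop :=
  ∀ c : ι → ℕ, ∑ i, c i = d → 0 < ρ c → ∀ j k : ι, 0 < c j → 0 < c k →
    (((c j : ℝ) + (if j = k then 1 else 0)) / ((c j : ℝ) + 1)) * (ρ c / ρ (unitMove c j k))
      = (((c k : ℝ) + 1) / ((c k : ℝ) + (if j = k then 1 else 0))) * (ρ (unitMove c k j) / ρ c)

variable {A : Set ι} {d : ℕ}

theorem logAffineAlongMoves_mul_prod_factorial (hpos : ∀ c ∈ latticeSimplex A d, 0 < ρ c)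
    (hbal : DetailedBalance d ρ) :
    LogAffineAlongMoves A d fun c => ρ c * ∏ i, ((c i)! : ℝ) := by
  intro c hc j k hj hk
  rcases eq_or_ne j k with rfl | hjk
  · rw [unitMove_self hj, sq]
  refine mul_prod_factorial_sq_eq hjk hj hk ?_
  have hb := hbal c hc.1 (hpos c hc) j k hj hk
  have hjk' := hpos _ (latticeSimplex.unitMove_mem hc hj (latticeSimplex.mem_of_pos hc hk))
  have hkj := hpos _ (latticeSimplex.unitMove_mem hc hk (latticeSimplex.mem_of_pos hc hj))
  have hc := hpos c hc
  rw [if_neg hjk, add_zero, add_zero] at hb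
  field_simp at hb
  linear_combination hb

end DetailedBalance

section Normalization

variable [Fintype ι] [DecidableEq ι]

theorem sum_factorial_div_mul_prod_pow (p : ι → ℝ) (d : ℕ) :
    ∑ c ∈ piAntidiag univ d, ((d ! : ℝ) / ∏ i, ((c i)! : ℝ)) * ∏ i, p i ^ c i
      = (∑ i, p i) ^ d := by
  rw [Finset.sum_pow_eq_sum_piAntidiag]
  refine Finset.sum_congr rfl fun c hc => ?_
  have hspec := Nat.multinomial_spec univ c
  rw [(mem_piAntidiag.mp hc).1] at hspec
  congr 1
  rw [div_eq_iff (by positivity), mul_comm]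
  exact_mod_cast hspec.symm

theorem exists_eq_factorial_div_mul_prod_pow {ρ : (ι → ℕ) → ℝ} {d : ℕ}
    (hsum : ∑ c ∈ piAntidiag univ d, ρ c = 1) {K : ℝ} {b : ι → ℝ} (hb₀ : ∀ i, 0 ≤ b i)
    (hb : 0 < ∑ i, b i)
    (hρ : ∀ c ∈ piAntidiag univ d, ρ c * ∏ i, ((c i)! : ℝ) = K * ∏ i, b i ^ c i) :
    ∃ p : ι → ℝ, (∀ i, 0 ≤ p i) ∧ (∀ i, b i = 0 → p i = 0) ∧ ∑ i, p i = 1 ∧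
      ∀ c ∈ piAntidiag univ d, ρ c = ((d ! : ℝ) / ∏ i, ((c i)! : ℝ)) * ∏ i, p i ^ c i := by
  set S := ∑ j, b j
  have hp₁ : ∑ i, b i / S = 1 := by rw [← Finset.sum_div, div_self hb.ne']
  have hscaled : ∀ c ∈ piAntidiag univ d,
      ρ c = K * S ^ d / d ! * (((d ! : ℝ) / ∏ i, ((c i)! : ℝ)) * ∏ i, (b i / S) ^ c i) := by
    intro c hc
    have hprod : ∏ i, (b i / S) ^ c i = (∏ i, b i ^ c i) / S ^ d := by
      simp only [div_pow, Finset.prod_div_distrib, Finset.prod_pow_eq_pow_sum,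
        (mem_piAntidiag.mp hc).1]
    have hfact : (0 : ℝ) < ∏ i, ((c i)! : ℝ) := by positivity
    calc ρ c = K * (∏ i, b i ^ c i) / ∏ i, ((c i)! : ℝ) := by
          rw [← hρ c hc, mul_div_cancel_right₀ _ hfact.ne']
      _ = _ := by rw [hprod]; field_simp
  have hK : K * S ^ d / d ! = 1 := by
    rw [← hsum, Finset.sum_congr rfl hscaled, ← Finset.mul_sum, sum_factorial_div_mul_prod_pow,
      hp₁, one_pow, mul_one]
  refine ⟨fun i => b i / S, fun i => div_nonneg (hb₀ i) hb.le, fun i hi => by simp [hi], hp₁,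
    fun c hc => ?_⟩
  rw [hscaled c hc, hK, one_mul]

end Normalization

open scoped Classical

theorem multinomial_characterization_general
    (n d : ℕ) (hd : 1 ≤ d)
    (ρ : (Fin n → ℕ) → ℝ)
    (hρnonneg : ∀ c, 0 ≤ ρ c)
    (hρsum : ∑ c ∈ Finset.Nat.antidiagonalTuple n d, ρ c = 1)
    -- A = {j : ∃ c ∈ S, ρ(c) > 0, c_j > 0}
    (A : Set (Fin n))
    (hA : ∀ j, j ∈ A ↔ ∃ c : Fin n → ℕ, ∑ i, c i = d ∧ 0 < ρ c ∧ 0 < c j)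
    -- (i) positivity on vectors supported on A
    (hpos : ∀ c : Fin n → ℕ, ∑ i, c i = d → (∀ j, j ∉ A → c j = 0) → 0 < ρ c)
    -- (ii) detailed balance
    (hbal : ∀ c : Fin n → ℕ, ∑ i, c i = d → 0 < ρ c → ∀ j k : Fin n,
      0 < c j → 0 < c k →
      (((c j : ℝ) + (if j = k then 1 else 0)) / ((c j : ℝ) + 1)) *
        (ρ c / ρ (fun i => c i - (if i = j then 1 else 0) + (if i = k then 1 else 0)))
      = (((c k : ℝ) + 1) / ((c k : ℝ) + (if j = k then 1 else 0))) *
        (ρ (fun i => c i - (if i = k then 1 else 0) + (if i = j then 1 else 0)) / ρ c)) :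
    ∃ p : Fin n → ℝ, (∀ j, 0 ≤ p j) ∧ (∀ j, j ∉ A → p j = 0) ∧
      (∑ j ∈ Finset.univ.filter (fun j => j ∈ A), p j = 1) ∧
      ∀ c : Fin n → ℕ, ∑ i, c i = d → (∀ j, j ∉ A → c j = 0) →
        ρ c = ((d.factorial : ℝ) / ∏ j, ((c j).factorial : ℝ)) * ∏ j, p j ^ c j := by
  rw [← piAntidiag_univ_fin_eq_antidiagonalTuple] at hρsum
  obtain ⟨j₀, hj₀⟩ : ∃ j₀, j₀ ∈ A := by
    obtain ⟨c, hc, hρc⟩ := Finset.exists_ne_zero_of_sum_ne_zero (hρsum.trans_ne one_ne_zero)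
    have hcd : ∑ i, c i = d := (mem_piAntidiag.mp hc).1
    obtain ⟨j, -, hcj⟩ := exists_pos_apply_notMem_of_sum_lt (c := c) (s := ∅)
      (by rw [sum_empty, hcd]; omega)
    exact ⟨j, (hA j).mpr ⟨c, hcd, (hρnonneg c).lt_of_ne' hρc, hcj⟩⟩
  have hpos' : ∀ c ∈ latticeSimplex A d, 0 < ρ c := fun c hc => hpos c hc.1 hc.2
  obtain ⟨b, hbpos, hbA, hρb⟩ := (logAffineAlongMoves_mul_prod_factorial hpos' hbal)
    |>.exists_eqOn_const_mul_prod_pow (fun c hc => mul_pos (hpos' c hc) (by positivity)) hd hj₀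
  have hb₀ : ∀ j, 0 ≤ b j := fun j => by
    by_cases hj : j ∈ A
    · exact (hbpos j hj).le
    · exact (hbA j hj).ge
  obtain ⟨p, hp₀, hpb, hp₁, hρp⟩ := exists_eq_factorial_div_mul_prod_pow hρsum hb₀
    (Finset.sum_pos' (fun j _ => hb₀ j) ⟨j₀, mem_univ j₀, hbpos j₀ hj₀⟩) fun c hc => by
      have hcd : ∑ i, c i = d := (mem_piAntidiag.mp hc).1
      by_cases hcA : ∀ j ∉ A, c j = 0
      · exact hρb ⟨hcd, hcA⟩
      obtain ⟨j, hjA, hcj⟩ : ∃ j ∉ A, c j ≠ 0 := by simpa using hcA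
      have hρc : 0 = ρ c := (hρnonneg c).eq_or_lt.resolve_right fun hρc =>
        hjA ((hA j).mpr ⟨c, hcd, hρc, Nat.pos_of_ne_zero hcj⟩)
      have hprod : ∏ i, b i ^ c i = 0 :=
        Finset.prod_eq_zero (mem_univ j) (by rw [hbA j hjA, zero_pow hcj])
      rw [← hρc, hprod, zero_mul, mul_zero]
  refine ⟨p, hp₀, fun j hj => hpb j (hbA j hj), ?_,
    fun c hc _ => hρp c (mem_piAntidiag.mpr ⟨hc, by simp⟩)⟩
  rwa [Finset.sum_filter_of_ne fun j _ hj => by_contra fun hjA => hj (hpb j (hbA j hjA))]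

/-- Lemma 4.3 of the paper: the detailed-balance condition characterizes
multinomial distributions. `c - e_j + e_k` is coordinate-wise in ℕ. -/
theorem multinomial_characterization
    (n d : ℕ) (hn : 1 ≤ n) (hd : 1 ≤ d)
    (ρ : (Fin n → ℕ) → ℝ)
    (hρnonneg : ∀ c, 0 ≤ ρ c)
    (hρsum : ∑ c ∈ Finset.Nat.antidiagonalTuple n d, ρ c = 1)
    -- A = {j : ∃ c ∈ S, ρ(c) > 0, c_j > 0}
    (A : Set (Fin n))
    (hA : ∀ j, j ∈ A ↔ ∃ c : Fin n → ℕ, ∑ i, c i = d ∧ 0 < ρ c ∧ 0 < c j)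
    -- (i) positivity on vectors supported on A
    (hpos : ∀ c : Fin n → ℕ, ∑ i, c i = d → (∀ j, j ∉ A → c j = 0) → 0 < ρ c)
    -- (ii) detailed balance
    (hbal : ∀ c : Fin n → ℕ, ∑ i, c i = d → 0 < ρ c → ∀ j k : Fin n,
      0 < c j → 0 < c k →
      (((c j : ℝ) + (if j = k then 1 else 0)) / ((c j : ℝ) + 1)) *
        (ρ c / ρ (fun i => c i - (if i = j then 1 else 0) + (if i = k then 1 else 0)))
      = (((c k : ℝ) + 1) / ((c k : ℝ) + (if j = k then 1 else 0))) *
        (ρ (fun i => c i - (if i = k then 1 else 0) + (if i = j then 1 else 0)) / ρ c)) :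
    ∃ p : Fin n → ℝ, (∀ j, 0 ≤ p j) ∧ (∀ j, j ∉ A → p j = 0) ∧
      (∑ j ∈ Finset.univ.filter (fun j => j ∈ A), p j = 1) ∧
      ∀ c : Fin n → ℕ, ∑ i, c i = d → (∀ j, j ∉ A → c j = 0) →
        ρ c = ((d.factorial : ℝ) / ∏ j, ((c j).factorial : ℝ)) * ∏ j, p j ^ c j :=
  multinomial_characterization_general n d hd ρ hρnonneg hρsum A hA hpos hbal
end

section
/- Let V be a type (the set of 'states'), and let w : V × V → ℝ be a weight function. Suppose that for every k ≥ 2 and every cyclic sequence v_1, ..., v_k = v_1 in V with all of v_1, ..., v_{k-1} pairwise distinct, one has ∏_{p=1}^{k-1} w(v_p, v_{p+1}) = 1, and suppose w(u, v) · w(v, u) = 1 for all u, v with w(u,v) ≠ 0 (so 2-cycles also have product 1). Then for every m ≥ 2 and every cyclic sequence v_1, ..., v_m = v_1 in V (with possible repetitions), ∏_{p=1}^{m-1} w(v_p, v_{p+1}) = 1, provided each factor w(v_p, v_{p+1}) is nonzero. -/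
/-!
Induct on the length of the cycle; a cycle without repeated states is covered by the hypothesis.
If instead `v p = v (p + e)`, the product over the cycle factors as the product over the closed
sub-walk `v p, …, v (p + e)` times the product over the cycle with that sub-walk cut out
(`excise`). Both are strictly shorter cycles, so both products are `1`.
-/

open Finset

section

variable {V M : Type*} [CommMonoid M]

def excise (v : ℕ → V) (p e : ℕ) : ℕ → V := fun i => if i ≤ p then v i else v (i + e)

lemma excise_of_le {v : ℕ → V} {p e i : ℕ} (h : i ≤ p) : excise v p e i = v i := if_pos h

lemma excise_of_lt {v : ℕ → V} {p e i : ℕ} (h : p < i) : excise v p e i = v (i + e) :=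
  if_neg (Nat.not_le.mpr h)

lemma excise_of_le_of_loop {v : ℕ → V} {p e i : ℕ} (hloop : v (p + e) = v p) (h : p ≤ i) :
    excise v p e i = v (i + e) := by
  rcases h.eq_or_lt with rfl | h
  · exact (excise_of_le le_rfl).trans hloop.symm
  · exact excise_of_lt h

lemma prod_Ico_excise (w : V × V → M) {v : ℕ → V} {a p e b : ℕ} (hap : a ≤ p) (hpb : p ≤ b)
    (hloop : v (p + e) = v p) :
    ∏ i ∈ Ico a (b + e), w (v i, v (i + 1)) =
      (∏ i ∈ Ico p (p + e), w (v i, v (i + 1))) *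
        ∏ i ∈ Ico a b, w (excise v p e i, excise v p e (i + 1)) := by
  have hbefore : ∏ i ∈ Ico a p, w (excise v p e i, excise v p e (i + 1)) =
      ∏ i ∈ Ico a p, w (v i, v (i + 1)) := by
    refine prod_congr rfl fun i hi => ?_
    have hi : i + 1 ≤ p := (mem_Ico.mp hi).2
    rw [excise_of_le (by omega), excise_of_le hi]
  have hafter : ∏ i ∈ Ico p b, w (excise v p e i, excise v p e (i + 1)) =
      ∏ i ∈ Ico (p + e) (b + e), w (v i, v (i + 1)) := by
    rw [← prod_Ico_add' (fun i => w (v i, v (i + 1)))]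
    refine prod_congr rfl fun i hi => ?_
    have hi : p ≤ i := (mem_Ico.mp hi).1
    rw [excise_of_le_of_loop hloop hi, excise_of_lt (by omega), Nat.add_right_comm]
  rw [← prod_Ico_consecutive _ hap hpb, hbefore, hafter,
    ← prod_Ico_consecutive _ (hap.trans (Nat.le_add_right p e)) (Nat.add_le_add_right hpb e),
    ← prod_Ico_consecutive _ hap (Nat.le_add_right p e)]
  ac_rfl

lemma prod_Ico_walk_shift (w : V × V → M) (v : ℕ → V) (a b c : ℕ) :
    ∏ i ∈ Ico a b, w (v (i + c), v (i + 1 + c)) = ∏ i ∈ Ico (a + c) (b + c), w (v i, v (i + 1)) := by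
  simp only [Nat.add_right_comm _ 1 c]
  exact prod_Ico_add' (fun i => w (v i, v (i + 1))) a b c

theorem prod_cycle_eq_one_of_prod_simple_cycle_eq_one (w : V × V → M)
    (hsimple : ∀ k : ℕ, 2 ≤ k → ∀ v : ℕ → V, v k = v 1 →
      (∀ p q, 1 ≤ p → p < q → q < k → v p ≠ v q) →
      ∏ p ∈ Ico 1 k, w (v p, v (p + 1)) = 1) :
    ∀ m : ℕ, 2 ≤ m → ∀ v : ℕ → V, v m = v 1 → ∏ p ∈ Ico 1 m, w (v p, v (p + 1)) = 1 := by
  intro m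
  induction m using Nat.strong_induction_on with
  | _ m ih =>
  intro hm v hcycle
  by_cases hdistinct : ∀ p q, 1 ≤ p → p < q → q < m → v p ≠ v q
  · exact hsimple m hm v hcycle hdistinct
  push Not at hdistinct
  obtain ⟨p, q, hp, hpq, hqm, hrepeat⟩ := hdistinct
  obtain ⟨e, rfl⟩ : ∃ e, q = p + e := ⟨q - p, by omega⟩
  obtain ⟨n, rfl⟩ : ∃ n, m = n + e := ⟨m - e, by omega⟩
  have hloop : ∏ i ∈ Ico p (p + e), w (v i, v (i + 1)) = 1 := by
    have h := ih (e + 1) (by omega) (by omega) (fun i => v (i + (p - 1)))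
      (show v (e + 1 + (p - 1)) = v (1 + (p - 1)) by
        rw [show e + 1 + (p - 1) = p + e by omega, show 1 + (p - 1) = p by omega, hrepeat])
    rwa [prod_Ico_walk_shift, show 1 + (p - 1) = p by omega,
      show e + 1 + (p - 1) = p + e by omega] at h
  have hrest := ih n (by omega) (by omega) (excise v p e)
    (by rw [excise_of_lt (by omega), excise_of_le hp, hcycle])
  rw [prod_Ico_excise w hp (by omega) hrepeat.symm, hloop, hrest, one_mul]

end

theorem cycle_product_excision_general {V : Type*} (w : V × V → ℝ)
    (hsimple : ∀ k : ℕ, 2 ≤ k → ∀ v : ℕ → V, v k = v 1 →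
      (∀ p q, 1 ≤ p → p < q → q < k → v p ≠ v q) →
      ∏ p ∈ Finset.Ico 1 k, w (v p, v (p + 1)) = 1) :
    ∀ m : ℕ, 2 ≤ m → ∀ v : ℕ → V, v m = v 1 →
      (∀ p ∈ Finset.Ico 1 m, w (v p, v (p + 1)) ≠ 0) →
      ∏ p ∈ Finset.Ico 1 m, w (v p, v (p + 1)) = 1 :=
  fun m hm v hcycle _ => prod_cycle_eq_one_of_prod_simple_cycle_eq_one w hsimple m hm v hcycle

/-- Abstract form of Lemma 3.4: if the cycle-product condition holds for cycles
without repeated states (and for 2-cycles), then it holds for all cycles. -/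
theorem cycle_product_excision {V : Type*} (w : V × V → ℝ)
    (hsimple : ∀ k : ℕ, 2 ≤ k → ∀ v : ℕ → V, v k = v 1 →
      (∀ p q, 1 ≤ p → p < q → q < k → v p ≠ v q) →
      ∏ p ∈ Finset.Ico 1 k, w (v p, v (p + 1)) = 1)
    (hpair : ∀ u v : V, w (u, v) ≠ 0 → w (u, v) * w (v, u) = 1) :
    ∀ m : ℕ, 2 ≤ m → ∀ v : ℕ → V, v m = v 1 →
      (∀ p ∈ Finset.Ico 1 m, w (v p, v (p + 1)) ≠ 0) →
      ∏ p ∈ Finset.Ico 1 m, w (v p, v (p + 1)) = 1 :=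
  cycle_product_excision_general w hsimple
end

section
/- Let n ≥ 1 and let p : Fin n → Fin n → ℝ be as in Example 4.2 with n = 3: p(1,1), p(1,2), p(1,3), p(2,1), p(2,3), p(3,1), p(3,2) ∈ (0,1), p(2,2) = p(3,3) = 0, satisfying p(1,1)+p(1,2)+p(1,3) = 1, p(2,1)+p(2,3) = 1, p(3,1)+p(3,2) = 1. Then the full cycle condition ∏_{s} p(i_s, i_{s+1})/p(i_{s+1}, i_s) = 1 for all cycles through edges with positive weight holds if and only if the single 3-cycle condition p(1,2) p(2,3) p(3,1) = p(2,1) p(3,2) p(1,3) holds. -/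
/-!
If the 3-cycle equation holds, the weights admit a potential `q` with
`p i j / p j i = q j / q i` on every edge of positive weight, so the product around any cycle
telescopes to `1`. Conversely, the cycle condition applied to `0 → 1 → 2 → 0` is the 3-cycle
equation.
-/

open Finset

/-- Condition (26), the paper's cycle `i_1, …, i_m = i_1` being written `v 1, …, v m`. -/
def KolmogorovCycleCondition {α K : Type*} [Field K] [LT K] (p : α → α → K) : Prop :=
  ∀ m : ℕ, 2 ≤ m → ∀ v : ℕ → α, v m = v 1 →
    (∀ s ∈ Ico 1 m, 0 < p (v s) (v (s + 1))) →
    ∏ s ∈ Ico 1 m, p (v s) (v (s + 1)) / p (v (s + 1)) (v s) = 1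

theorem kolmogorovCycleCondition_of_potential {α K : Type*} [Field K] [LT K]
    {p : α → α → K} (q : α → K) (hq : ∀ i, q i ≠ 0)
    (hpot : ∀ i j, 0 < p i j → p i j / p j i = q j / q i) :
    KolmogorovCycleCondition p := by
  intro m hm v hvm hpos
  let u : α → Kˣ := fun i => Units.mk0 (q i) (hq i)
  calc ∏ s ∈ Ico 1 m, p (v s) (v (s + 1)) / p (v (s + 1)) (v s)
      = ∏ s ∈ Ico 1 m, ((u (v (s + 1)) / u (v s) : Kˣ) : K) :=
        prod_congr rfl fun s hs => by simp [u, hpot _ _ (hpos s hs)]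
    _ = 1 := by
        rw [← Units.coe_prod, prod_Ico_div (fun s => u (v s)) (by omega), hvm, div_self',
          Units.val_one]

theorem mul_eq_mul_of_kolmogorovCycleCondition {K : Type*} [Field K] [LT K]
    {p : Fin 3 → Fin 3 → K} (h : KolmogorovCycleCondition p)
    (h01 : 0 < p 0 1) (h12 : 0 < p 1 2) (h20 : 0 < p 2 0)
    (h10 : p 1 0 ≠ 0) (h21 : p 2 1 ≠ 0) (h02 : p 0 2 ≠ 0) :
    p 0 1 * p 1 2 * p 2 0 = p 1 0 * p 2 1 * p 0 2 := by
  -- `v 1, v 2, v 3, v 4 = 0, 1, 2, 0`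
  let v : ℕ → Fin 3 := fun s => Fin.ofNat 3 (s + 2)
  have hpos : ∀ s ∈ Ico 1 4, 0 < p (v s) (v (s + 1)) := by
    intro s hs
    obtain ⟨h1, h4⟩ := mem_Ico.mp hs
    interval_cases s <;> assumption
  have h3 := h 4 (by norm_num) v rfl hpos
  simp only [v, Fin.ofNat, prod_Ico_succ_top, Nat.one_le_ofNat, Nat.Ico_succ_singleton,
    prod_singleton, Nat.reduceAdd, Nat.mod_self, Nat.reduceMod, Fin.zero_eta, Fin.mk_one,
    Fin.reduceFinMk, Fin.isValue] at h3
  field_simp at h3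
  linear_combination h3

theorem kolmogorovCycleCondition_of_mul_eq_mul {K : Type*} [Field K] [LinearOrder K]
    [IsStrictOrderedRing K] {p : Fin 3 → Fin 3 → K}
    (h01 : 0 < p 0 1) (h12 : 0 < p 1 2) (h20 : 0 < p 2 0)
    (h10 : 0 < p 1 0) (h21 : 0 < p 2 1) (h02 : 0 < p 0 2)
    (heq : p 0 1 * p 1 2 * p 2 0 = p 1 0 * p 2 1 * p 0 2) :
    KolmogorovCycleCondition p := by
  -- `q i = p 0 i / p i 0`, the potential normalised at state `0`
  set q : Fin 3 → K := ![1, p 0 1 / p 1 0, p 0 2 / p 2 0]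
  have hq : ∀ i, q i ≠ 0 := by
    intro i
    fin_cases i <;> simp [q, h01.ne', h10.ne', h02.ne', h20.ne']
  refine kolmogorovCycleCondition_of_potential q hq fun i j hij => ?_
  obtain rfl | hne := eq_or_ne i j
  · rw [div_self hij.ne', div_self (hq i)]
  fin_cases i <;> fin_cases j <;> simp [q] at hne ⊢ <;> field_simp
  · linear_combination heq
  · linear_combination -heq

theorem cycle_condition_reduces_to_single_equation_general
    (p : Fin 3 → Fin 3 → ℝ)
    (h12 : p 0 1 ∈ Set.Ioo (0 : ℝ) 1)
    (h13 : p 0 2 ∈ Set.Ioo (0 : ℝ) 1) (h21 : p 1 0 ∈ Set.Ioo (0 : ℝ) 1)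
    (h23 : p 1 2 ∈ Set.Ioo (0 : ℝ) 1) (h31 : p 2 0 ∈ Set.Ioo (0 : ℝ) 1)
    (h32 : p 2 1 ∈ Set.Ioo (0 : ℝ) 1) :
    ((∀ m : ℕ, 2 ≤ m → ∀ v : ℕ → Fin 3, v m = v 1 →
        (∀ s ∈ Finset.Ico 1 m, 0 < p (v s) (v (s + 1))) →
        ∏ s ∈ Finset.Ico 1 m, p (v s) (v (s + 1)) / p (v (s + 1)) (v s) = 1)
      ↔ p 0 1 * p 1 2 * p 2 0 = p 1 0 * p 2 1 * p 0 2) :=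
  ⟨fun h => mul_eq_mul_of_kolmogorovCycleCondition h h12.1 h23.1 h31.1 h21.1.ne' h32.1.ne'
      h13.1.ne',
    kolmogorovCycleCondition_of_mul_eq_mul h12.1 h23.1 h31.1 h21.1 h32.1 h13.1⟩

/-- Example 4.2: on the 3-state structure with forbidden self-loops at states 2
and 3, the full Kolmogorov cycle condition (26) reduces to the single 3-cycle
condition. Here the states 1, 2, 3 are represented by `0, 1, 2 : Fin 3`. -/
theorem cycle_condition_reduces_to_single_equation
    (p : Fin 3 → Fin 3 → ℝ)
    (h11 : p 0 0 ∈ Set.Ioo (0 : ℝ) 1) (h12 : p 0 1 ∈ Set.Ioo (0 : ℝ) 1)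
    (h13 : p 0 2 ∈ Set.Ioo (0 : ℝ) 1) (h21 : p 1 0 ∈ Set.Ioo (0 : ℝ) 1)
    (h23 : p 1 2 ∈ Set.Ioo (0 : ℝ) 1) (h31 : p 2 0 ∈ Set.Ioo (0 : ℝ) 1)
    (h32 : p 2 1 ∈ Set.Ioo (0 : ℝ) 1)
    (h22 : p 1 1 = 0) (h33 : p 2 2 = 0)
    (hrow1 : p 0 0 + p 0 1 + p 0 2 = 1)
    (hrow2 : p 1 0 + p 1 2 = 1)
    (hrow3 : p 2 0 + p 2 1 = 1) :
    ((∀ m : ℕ, 2 ≤ m → ∀ v : ℕ → Fin 3, v m = v 1 →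
        (∀ s ∈ Finset.Ico 1 m, 0 < p (v s) (v (s + 1))) →
        ∏ s ∈ Finset.Ico 1 m, p (v s) (v (s + 1)) / p (v (s + 1)) (v s) = 1)
      ↔ p 0 1 * p 1 2 * p 2 0 = p 1 0 * p 2 1 * p 0 2) :=
  cycle_condition_reduces_to_single_equation_general p h12 h13 h21 h23 h31 h32
end
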